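/- arXiv:2505.00298 — 2 statements merged into one kernel-verified Lean document; each statement's English description precedes it below -/
import Mathlib

section
/- Let k and n be integers with 3 ≤ k ≤ n and let D be a digraph of order n. Then 0 ≤ τ_k(D) + τ_k(D^c) ≤ n − k, where D^c is the complement digraph of D. -/
/-- A digraph: no loops, no parallel arcs (arcs are a set of ordered pairs). -/
structure Dgraph (V : Type*) where
  Adj : V → V → Prop
  loopless : ∀ v, ¬ Adj v v

namespace Dgraph

variable {V : Type*}

/-- A subdigraph of `D`: a vertex set together with an arc set contained in that of `D`,
whose arcs join vertices of the vertex set. -/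
structure Sub (D : Dgraph V) where
  verts : Set V
  Adj : V → V → Prop
  adj_sub : ∀ ⦃u v : V⦄, Adj u v → D.Adj u v
  mem_left : ∀ ⦃u v : V⦄, Adj u v → u ∈ verts
  mem_right : ∀ ⦃u v : V⦄, Adj u v → v ∈ verts

/-- The degree of a vertex in a subdigraph: out-degree plus in-degree. -/
noncomputable def Sub.deg {D : Dgraph V} (T : D.Sub) (v : V) : ℕ :=
  {w | T.Adj v w}.ncard + {w | T.Adj w v}.ncard

/-- `T` is an out-tree rooted at `r`: `r` belongs to `T`, has in-degree zero, every other
vertex of `T` has in-degree exactly one, and every vertex of `T` is reachable from `r`. -/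
def Sub.IsOutTree {D : Dgraph V} (T : D.Sub) (r : V) : Prop :=
  r ∈ T.verts ∧ (∀ w, ¬ T.Adj w r) ∧
    (∀ v ∈ T.verts, v ≠ r → ∃! u, T.Adj u v) ∧
    ∀ v ∈ T.verts, Relation.ReflTransGen T.Adj r v

/-- A pendant `(S,r)`-tree in `D`: an out-tree rooted at `r` containing `S` in which every
vertex of `S` has degree one. -/
def IsPendantTree (D : Dgraph V) (S : Set V) (r : V) (T : D.Sub) : Prop :=
  T.IsOutTree r ∧ S ⊆ T.verts ∧ ∀ s ∈ S, T.deg s = 1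

/-- Two subdigraphs are internally disjoint (w.r.t. `S`) if they are arc-disjoint and their
common vertex set is exactly `S`. -/
def InternallyDisjoint (D : Dgraph V) (S : Set V) (T₁ T₂ : D.Sub) : Prop :=
  (∀ u v, ¬ (T₁.Adj u v ∧ T₂.Adj u v)) ∧ T₁.verts ∩ T₂.verts = S

/-- `τ_{S,r}(D)`: the maximum number of pairwise internally-disjoint pendant `(S,r)`-trees. -/
noncomputable def tauSr (D : Dgraph V) (S : Set V) (r : V) : ℕ :=
  sSup {m : ℕ | ∃ f : Fin m → D.Sub,
    (∀ i, D.IsPendantTree S r (f i)) ∧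
    ∀ i j, i ≠ j → D.InternallyDisjoint S (f i) (f j)}

/-- `τ_k(D)`: the minimum of `τ_{S,r}(D)` over all `S ⊆ V(D)` with `|S| = k` and `r ∈ S`. -/
noncomputable def tauK (D : Dgraph V) (k : ℕ) : ℕ :=
  sInf {m : ℕ | ∃ (S : Set V) (r : V), S.ncard = k ∧ r ∈ S ∧ m = D.tauSr S r}

end Dgraph

/-- The complement digraph of `D`. -/
def Dgraph.compl {V : Type*} (D : Dgraph V) : Dgraph V :=
  ⟨fun x y => x ≠ y ∧ ¬ D.Adj x y, fun _ h => h.1 rfl⟩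

/-!
Fix `S` with `|S| = k` and `r ∈ S`. For `k ≥ 3` the root of a pendant `(S,r)`-tree has a unique
out-neighbour, and it lies outside `S`. Internally disjoint trees have different such neighbours,
and so do a tree of `D` and a tree of `Dᶜ`, since no arc `r → x` lies in both. Hence
`τ_{S,r}(D) + τ_{S,r}(Dᶜ) ≤ n - k`, and `τ_k ≤ τ_{S,r}` on both sides.
-/

namespace Dgraph

variable {V : Type*} {D : Dgraph V} {S : Set V} {r : V}

theorem compl_adj {x y : V} : D.compl.Adj x y ↔ x ≠ y ∧ ¬ D.Adj x y := Iff.rfl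

/-- The families counted by `τ_{S,r}(D)`. -/
def IsPacking (D : Dgraph V) (S : Set V) (r : V) {m : ℕ} (f : Fin m → D.Sub) : Prop :=
  (∀ i, D.IsPendantTree S r (f i)) ∧ ∀ i j, i ≠ j → D.InternallyDisjoint S (f i) (f j)

theorem isPacking_elim0 : D.IsPacking S r (Fin.elim0 : Fin 0 → D.Sub) :=
  ⟨fun i => i.elim0, fun i => i.elim0⟩

theorem Sub.two_le_deg [Finite V] {T : D.Sub} {u v w : V} (huv : T.Adj u v) (hvw : T.Adj v w) :
    2 ≤ T.deg v := by
  have hout : 0 < {w | T.Adj v w}.ncard := (Set.ncard_pos).2 ⟨w, hvw⟩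
  have hin : 0 < {u | T.Adj u v}.ncard := (Set.ncard_pos).2 ⟨u, huv⟩
  unfold Sub.deg
  omega

theorem InternallyDisjoint.mem_of_mem_of_mem {T₁ T₂ : D.Sub} (h : D.InternallyDisjoint S T₁ T₂)
    {x : V} (h₁ : x ∈ T₁.verts) (h₂ : x ∈ T₂.verts) : x ∈ S :=
  h.2 ▸ ⟨h₁, h₂⟩

theorem IsPendantTree.exists_root_out_eq_singleton {T : D.Sub} (hT : D.IsPendantTree S r T)
    (hr : r ∈ S) : ∃ x, {w | T.Adj r w} = {x} := by
  have hin : {w | T.Adj w r} = ∅ := Set.eq_empty_of_forall_notMem hT.1.2.1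
  have hdeg := hT.2.2 r hr
  rw [Sub.deg, hin, Set.ncard_empty, add_zero] at hdeg
  exact Set.ncard_eq_one.1 hdeg

/-- If the root's out-neighbour lay in `S` it would be a leaf, and no third vertex of `S` could be
reached from the root. -/
theorem IsPendantTree.exists_root_adj_notMem [Finite V] {T : D.Sub}
    (hT : D.IsPendantTree S r T) (hS : 3 ≤ S.ncard) (hr : r ∈ S) :
    ∃ x, T.Adj r x ∧ x ∉ S := by
  obtain ⟨x, hx⟩ := hT.exists_root_out_eq_singleton hr
  have hrx : T.Adj r x := show x ∈ {w | T.Adj r w} by rw [hx]; rfl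
  refine ⟨x, hrx, fun hxS => ?_⟩
  have hpair : ({r, x} : Set V).ncard < S.ncard :=
    (Set.ncard_insert_le r {x}).trans_lt (by rw [Set.ncard_singleton]; omega)
  obtain ⟨s, hsS, hs⟩ := Set.exists_mem_notMem_of_ncard_lt_ncard hpair
  simp only [Set.mem_insert_iff, Set.mem_singleton_iff, not_or] at hs
  obtain ⟨hsr, hsx⟩ := hs
  rcases (hT.1.2.2.2 s (hT.2.1 hsS)).cases_head with h | ⟨c, hrc, hcs⟩
  · exact hsr h.symm
  have hcx : c = x := by simpa [hx] using (show c ∈ {w | T.Adj r w} from hrc)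
  subst hcx
  rcases hcs.cases_head with h | ⟨d, hcd, -⟩
  · exact hsx h.symm
  have := hT.2.2 c hxS
  have := Sub.two_le_deg hrc hcd
  omega

theorem IsPacking.injective_of_root_adj {m : ℕ} {f : Fin m → D.Sub} (hf : D.IsPacking S r f)
    {x : Fin m → V} (hx : ∀ i, (f i).Adj r (x i)) (hxS : ∀ i, x i ∉ S) : Function.Injective x := by
  intro i j hij
  by_contra hne
  exact hxS i <| (hf.2 i j hne).mem_of_mem_of_mem ((f i).mem_right (hx i))
    (hij ▸ (f j).mem_right (hx j))

theorem IsPacking.card_add_card_compl_le [Finite V] {m m' : ℕ} {f : Fin m → D.Sub}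
    {g : Fin m' → D.compl.Sub} (hf : D.IsPacking S r f) (hg : D.compl.IsPacking S r g)
    (hS : 3 ≤ S.ncard) (hr : r ∈ S) : m + m' ≤ Nat.card V - S.ncard := by
  choose x hx hxS using fun i => (hf.1 i).exists_root_adj_notMem hS hr
  choose y hy hyS using fun i => (hg.1 i).exists_root_adj_notMem hS hr
  let F : Fin m ⊕ Fin m' → ↥Sᶜ := Sum.elim (fun i => ⟨x i, hxS i⟩) (fun i => ⟨y i, hyS i⟩)
  have hF : Function.Injective F := by
    refine Function.Injective.sumElim ?_ ?_ fun i j hij => ?_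
    · exact fun i j h => hf.injective_of_root_adj hx hxS (congrArg Subtype.val h)
    · exact fun i j h => hg.injective_of_root_adj hy hyS (congrArg Subtype.val h)
    · have hxy : x i = y j := congrArg Subtype.val hij
      exact (compl_adj.1 ((g j).adj_sub (hy j))).2 (hxy ▸ (f i).adj_sub (hx i))
  have := Nat.card_le_card_of_injective F hF
  rwa [Nat.card_sum, Nat.card_eq_fintype_card, Nat.card_eq_fintype_card, Fintype.card_fin,
    Fintype.card_fin, Nat.card_coe_set_eq, Set.ncard_compl] at this

theorem exists_isPacking_tauSr {B : ℕ} (hB : ∀ m (f : Fin m → D.Sub), D.IsPacking S r f → m ≤ B) :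
    ∃ f : Fin (D.tauSr S r) → D.Sub, D.IsPacking S r f :=
  Nat.sSup_mem (s := {m | ∃ f : Fin m → D.Sub, D.IsPacking S r f})
    ⟨0, _, isPacking_elim0⟩ ⟨B, fun m ⟨f, hf⟩ => hB m f hf⟩

theorem tauSr_add_compl_tauSr_le [Finite V] (hS : 3 ≤ S.ncard) (hr : r ∈ S) :
    D.tauSr S r + D.compl.tauSr S r ≤ Nat.card V - S.ncard := by
  obtain ⟨f, hf⟩ := exists_isPacking_tauSr (D := D) fun m f hf => by
    simpa using hf.card_add_card_compl_le isPacking_elim0 hS hr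
  obtain ⟨g, hg⟩ := exists_isPacking_tauSr (D := D.compl) fun m g hg => by
    simpa using isPacking_elim0.card_add_card_compl_le hg hS hr
  exact hf.card_add_card_compl_le hg hS hr

theorem tauK_le_tauSr {k : ℕ} (hS : S.ncard = k) (hr : r ∈ S) : D.tauK k ≤ D.tauSr S r :=
  Nat.sInf_le ⟨S, r, hS, hr, rfl⟩

end Dgraph

/-- Nordhaus–Gaddum: for `3 ≤ k ≤ n`, `0 ≤ τ_k(D) + τ_k(D^c) ≤ n - k`. -/
theorem tauK_nordhaus_gaddum_sum {V : Type*} [Fintype V] {n k : ℕ}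
    (hn : Fintype.card V = n) (hk3 : 3 ≤ k) (hkn : k ≤ n) (D : Dgraph V) :
    0 ≤ D.tauK k + D.compl.tauK k ∧ D.tauK k + D.compl.tauK k ≤ n - k := by
  refine ⟨Nat.zero_le _, ?_⟩
  obtain ⟨S, -, hS⟩ := Set.exists_subset_card_eq (s := (Set.univ : Set V)) (n := k)
    (by rwa [Set.ncard_univ, Nat.card_eq_fintype_card, hn])
  obtain ⟨r, hr⟩ := Set.nonempty_of_ncard_ne_zero (s := S) (by omega)
  have hsum := D.tauSr_add_compl_tauSr_le (hS ▸ hk3) hr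
  rw [hS, Nat.card_eq_fintype_card, hn] at hsum
  have := D.tauK_le_tauSr hS hr
  have := D.compl.tauK_le_tauSr hS hr
  omega
end

section
/- Let G be a tripartite graph with 3-partition (A, B, C) such that |A| = |B| = |C| = ℓ for an integer ℓ ≥ 2, let k ≥ 3 be an integer, and let D be the symmetric digraph constructed from G as described in the context, with S = {r, s₁, …, s_{k−1}} and root r. Then τ_{S,r}(D) ≥ ℓ if and only if there is a partition of V(G) into ℓ disjoint 3-element sets V₁, …, V_ℓ such that each V_i contains exactly one vertex of A, one vertex of B and one vertex of C, and the induced subgraph G[V_i] is connected for every i. -/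
/-- The arcs of the symmetric digraph `D` constructed from a tripartite graph `G` with
parts `(A, B, C)` in Theorem 2.4.  The extra vertices are encoded by
`Option (Fin (k-1))`: `none` is the root `r` and `some i` is `s_{i+1}`
(so `some 0 = s₁`).  Arcs: both orientations of every edge of `G`, both arcs between `r`
and every vertex of `A`, between `s₁` and every vertex of `B`, and between each `s_i`
(`2 ≤ i ≤ k-1`) and every vertex of `C`. -/
def triAdj {V : Type*} (G : SimpleGraph V) (A B C : Set V) (k : ℕ) :
    V ⊕ Option (Fin (k - 1)) → V ⊕ Option (Fin (k - 1)) → Prop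
  | Sum.inl x, Sum.inl y => G.Adj x y
  | Sum.inl x, Sum.inr none => x ∈ A
  | Sum.inr none, Sum.inl x => x ∈ A
  | Sum.inl x, Sum.inr (some i) => ((i : ℕ) = 0 ∧ x ∈ B) ∨ ((i : ℕ) ≠ 0 ∧ x ∈ C)
  | Sum.inr (some i), Sum.inl x => ((i : ℕ) = 0 ∧ x ∈ B) ∨ ((i : ℕ) ≠ 0 ∧ x ∈ C)
  | Sum.inr _, Sum.inr _ => False

/-- The symmetric digraph `D` constructed from the tripartite graph `G` in Theorem 2.4. -/
def triD {V : Type*} (G : SimpleGraph V) (A B C : Set V) (k : ℕ) :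
    Dgraph (V ⊕ Option (Fin (k - 1))) where
  Adj := triAdj G A B C k
  loopless := by
    rintro (x | e) h
    · exact G.loopless.irrefl x h
    · cases e <;> exact h

open Function

section Partition

variable {ι α : Type*} {U : ι → Set α} {P : Set α}

theorem eq_of_mem_of_pairwise_disjoint (hU : Pairwise (Disjoint on U)) {i j : ι} {x : α}
    (hi : x ∈ U i) (hj : x ∈ U j) : i = j :=
  (hU.pairwiseDisjoint Set.univ).elim_set trivial trivial x hi hj

theorem injective_of_pairwise_disjoint (hU : Pairwise (Disjoint on U)) {x : ι → α}
    (hx : ∀ i, x i ∈ U i) : Injective x := fun i j hij =>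
  eq_of_mem_of_pairwise_disjoint hU (hx i) (hij ▸ hx j)

theorem card_le_ncard_of_pairwise_disjoint (hP : P.Finite) (hU : Pairwise (Disjoint on U))
    (hmeet : ∀ i, (P ∩ U i).Nonempty) : Nat.card ι ≤ P.ncard := by
  choose x hxP hxU using hmeet
  rw [← Set.ncard_range_of_injective (injective_of_pairwise_disjoint hU hxU)]
  exact Set.ncard_le_ncard (Set.range_subset_iff.mpr hxP) hP

theorem subset_iUnion_and_existsUnique_of_pairwise_disjoint [Finite ι] (hP : P.Finite)
    (hcard : P.ncard = Nat.card ι) (hU : Pairwise (Disjoint on U))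
    (hmeet : ∀ i, (P ∩ U i).Nonempty) :
    P ⊆ ⋃ i, U i ∧ ∀ i, ∃! x, x ∈ P ∧ x ∈ U i := by
  choose x hxP hxU using hmeet
  have hrange : Set.range x = P :=
    Set.eq_of_subset_of_ncard_le (Set.range_subset_iff.mpr hxP)
      (by rw [hcard, Set.ncard_range_of_injective (injective_of_pairwise_disjoint hU hxU)]) hP
  refine ⟨hrange ▸ Set.range_subset_iff.mpr fun i => Set.mem_iUnion_of_mem i (hxU i),
    fun i => ⟨x i, ⟨hxP i, hxU i⟩, ?_⟩⟩
  rintro y ⟨hyP, hyU⟩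
  obtain ⟨j, rfl⟩ := hrange ▸ hyP
  rw [eq_of_mem_of_pairwise_disjoint hU (hxU j) hyU]

variable {A B C : Set α}

theorem exists_partition_of_pairwise_disjoint [Finite α] [Finite ι]
    (hU : Pairwise (Disjoint on U)) (hcover : A ∪ B ∪ C = Set.univ)
    (hA : A.ncard = Nat.card ι) (hB : B.ncard = Nat.card ι) (hC : C.ncard = Nat.card ι)
    (hUA : ∀ i, (A ∩ U i).Nonempty) (hUB : ∀ i, (B ∩ U i).Nonempty)
    (hUC : ∀ i, (C ∩ U i).Nonempty) :
    ∃ f : α → ι,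
      (∀ i, ∃! a, a ∈ A ∧ f a = i) ∧ (∀ i, ∃! b, b ∈ B ∧ f b = i) ∧
        (∀ i, ∃! c, c ∈ C ∧ f c = i) ∧ ∀ i, {v | f v = i} = U i := by
  obtain ⟨hAU, hA1⟩ := subset_iUnion_and_existsUnique_of_pairwise_disjoint A.toFinite hA hU hUA
  obtain ⟨hBU, hB1⟩ := subset_iUnion_and_existsUnique_of_pairwise_disjoint B.toFinite hB hU hUB
  obtain ⟨hCU, hC1⟩ := subset_iUnion_and_existsUnique_of_pairwise_disjoint C.toFinite hC hU hUC
  have hcov : ∀ v, ∃ i, v ∈ U i := fun v =>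
    Set.mem_iUnion.mp <| Set.union_subset (Set.union_subset hAU hBU) hCU (hcover ▸ trivial)
  choose f hf using hcov
  have hfi : ∀ v i, f v = i ↔ v ∈ U i := fun v i =>
    ⟨(· ▸ hf v), eq_of_mem_of_pairwise_disjoint hU (hf v)⟩
  refine ⟨f, ?_⟩
  simp only [hfi]
  exact ⟨hA1, hB1, hC1, fun _ => rfl⟩

theorem exists_triple_of_existsUnique {f : α → ι} {i : ι} (hcover : A ∪ B ∪ C = Set.univ)
    (hA : ∃! a, a ∈ A ∧ f a = i) (hB : ∃! b, b ∈ B ∧ f b = i) (hC : ∃! c, c ∈ C ∧ f c = i) :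
    ∃ a ∈ A, ∃ b ∈ B, ∃ c ∈ C, {v | f v = i} = {a, b, c} := by
  obtain ⟨a, ⟨haA, hai⟩, ha⟩ := hA
  obtain ⟨b, ⟨hbB, hbi⟩, hb⟩ := hB
  obtain ⟨c, ⟨hcC, hci⟩, hc⟩ := hC
  refine ⟨a, haA, b, hbB, c, hcC, Set.ext fun v => ⟨fun hv => ?_, ?_⟩⟩
  · rcases (hcover ▸ trivial : v ∈ A ∪ B ∪ C) with (hvA | hvB) | hvC
    · exact Or.inl (ha v ⟨hvA, hv⟩)
    · exact Or.inr (Or.inl (hb v ⟨hvB, hv⟩))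
    · exact Or.inr (Or.inr (hc v ⟨hvC, hv⟩))
  · rintro (rfl | rfl | rfl) <;> assumption

end Partition

/-- The disjunction lists the three spanning out-trees of `{a, b, c}` rooted at `a`, by the
parents `pb` of `b` and `pc` of `c`. -/
theorem SimpleGraph.exists_parents_of_connected_induce {V : Type*} {G : SimpleGraph V}
    {a b c : V} (hab : a ≠ b) (h : (G.induce {a, b, c}).Connected) :
    ∃ pb pc, G.Adj pb b ∧ G.Adj pc c ∧ (pb = a ∧ pc = a ∨ pb = a ∧ pc = b ∨ pb = c ∧ pc = a) := by
  have : Nontrivial ({a, b, c} : Set V) :=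
    Set.nontrivial_coe_sort.mpr ⟨a, by simp, b, by simp, hab⟩
  have hnbr : ∀ x ∈ ({a, b, c} : Set V), ∃ y, (y = a ∨ y = b ∨ y = c) ∧ G.Adj x y :=
    fun x hx => by
      obtain ⟨⟨y, hy⟩, hxy⟩ := h.preconnected.exists_adj_of_nontrivial ⟨x, hx⟩
      exact ⟨y, hy, hxy⟩
  by_cases hab' : G.Adj a b
  · by_cases hac' : G.Adj a c
    · exact ⟨a, a, hab', hac', Or.inl ⟨rfl, rfl⟩⟩
    · obtain ⟨y, rfl | rfl | rfl, hcy⟩ := hnbr c (by simp)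
      · exact absurd hcy.symm hac'
      · exact ⟨a, y, hab', hcy.symm, Or.inr (Or.inl ⟨rfl, rfl⟩)⟩
      · exact absurd hcy (G.loopless.irrefl _)
  · obtain ⟨y, rfl | rfl | rfl, hay⟩ := hnbr a (by simp)
    · exact absurd hay (G.loopless.irrefl _)
    · exact absurd hay hab'
    obtain ⟨z, rfl | rfl | rfl, hbz⟩ := hnbr b (by simp)
    · exact absurd hbz.symm hab'
    · exact absurd hbz (G.loopless.irrefl _)
    · exact ⟨z, a, hbz.symm, hay, Or.inr (Or.inr ⟨rfl, rfl⟩)⟩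

namespace Dgraph

variable {V : Type*} {D : Dgraph V} {S : Set V} {r : V}

def IsPendantPacking (D : Dgraph V) (S : Set V) (r : V) {m : ℕ} (f : Fin m → D.Sub) : Prop :=
  (∀ i, D.IsPendantTree S r (f i)) ∧ ∀ i j, i ≠ j → D.InternallyDisjoint S (f i) (f j)

theorem le_tauSr_iff {m : ℕ}
    (hbdd : BddAbove {n : ℕ | ∃ f : Fin n → D.Sub, D.IsPendantPacking S r f}) :
    m ≤ D.tauSr S r ↔ ∃ f : Fin m → D.Sub, D.IsPendantPacking S r f := by
  refine ⟨fun hm => ?_, fun ⟨f, hf⟩ => le_csSup hbdd ⟨f, hf⟩⟩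
  have hne : {n : ℕ | ∃ f : Fin n → D.Sub, D.IsPendantPacking S r f}.Nonempty :=
    ⟨0, Fin.elim0, fun i => i.elim0, fun i => i.elim0⟩
  obtain ⟨f, hpend, hdisj⟩ := Nat.sSup_mem hne hbdd
  exact ⟨f ∘ Fin.castLE hm, fun i => hpend _,
    fun i j hij => hdisj _ _ ((Fin.castLE_injective hm).ne hij)⟩

theorem InternallyDisjoint.of_verts_inter_eq {T₁ T₂ : D.Sub}
    (h : T₁.verts ∩ T₂.verts = S) (hS : ∀ u ∈ S, ∀ v ∈ S, ¬ D.Adj u v) :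
    D.InternallyDisjoint S T₁ T₂ := by
  refine ⟨fun u v ⟨h₁, h₂⟩ => hS u ?_ v ?_ (T₁.adj_sub h₁), h⟩
  · exact h ▸ ⟨T₁.mem_left h₁, T₂.mem_left h₂⟩
  · exact h ▸ ⟨T₁.mem_right h₁, T₂.mem_right h₂⟩

theorem InternallyDisjoint.disjoint_preimage_inl {α β : Type*} {D : Dgraph (α ⊕ β)}
    {T₁ T₂ : D.Sub} (h : D.InternallyDisjoint (Set.range Sum.inr) T₁ T₂) :
    Disjoint (Sum.inl ⁻¹' T₁.verts) (Sum.inl ⁻¹' T₂.verts) := by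
  rw [Set.disjoint_iff_inter_eq_empty, ← Set.preimage_inter, h.2, Set.preimage_inl_range_inr]

section PendantTree

variable {T : D.Sub}

theorem IsPendantTree.existsUnique_adj_root (hT : D.IsPendantTree S r T) (hr : r ∈ S) :
    ∃! a, T.Adj r a := by
  have hdeg := hT.2.2 r hr
  have hin : {w | T.Adj w r} = ∅ := Set.eq_empty_of_forall_notMem hT.1.2.1
  rw [Sub.deg, hin, Set.ncard_empty, add_zero, Set.ncard_eq_one] at hdeg
  obtain ⟨a, ha⟩ := hdeg
  exact ⟨a, Set.eq_singleton_iff_unique_mem.mp ha⟩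

/-- A terminal other than the root is a leaf: its degree is used up by its in-arc. -/
theorem IsPendantTree.not_adj_of_mem [Finite V] (hT : D.IsPendantTree S r T) {s : V}
    (hs : s ∈ S) (hsr : s ≠ r) (w : V) : ¬ T.Adj s w := by
  obtain ⟨u, hu⟩ := hT.1.2.2.1 s (hT.2.1 hs) hsr
  have hin : {w | T.Adj w s} = {u} := Set.eq_singleton_iff_unique_mem.mpr hu
  have hdeg := hT.2.2 s hs
  rw [Sub.deg, hin, Set.ncard_singleton, Nat.add_eq_right, Set.ncard_eq_zero] at hdeg
  exact Set.eq_empty_iff_forall_notMem.mp hdeg w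

theorem IsPendantTree.reflTransGen_of_notMem [Finite V] (hT : D.IsPendantTree S r T)
    (hr : r ∈ S) {a v : V} (ha : T.Adj r a) (hv : Relation.ReflTransGen T.Adj r v)
    (hvS : v ∉ S) : Relation.ReflTransGen (fun x y => T.Adj x y ∧ x ∉ S ∧ y ∉ S) a v := by
  induction hv with
  | refl => exact absurd hr hvS
  | @tail w v _ hwv ih =>
    by_cases hwS : w ∈ S
    · by_cases hwr : w = r
      · subst hwr
        rw [(hT.existsUnique_adj_root hr).unique hwv ha]
      · exact absurd hwv (hT.not_adj_of_mem hwS hwr v)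
    · exact (ih hwS).tail ⟨hwv, hwS, hvS⟩

end PendantTree

section OfParent

variable {W : Set V} {p : V → V}

def Sub.ofParent (D : Dgraph V) (W : Set V) (r : V) (p : V → V) : D.Sub where
  verts := W
  Adj u v := v ∈ W ∧ v ≠ r ∧ p v = u ∧ u ∈ W ∧ D.Adj u v
  adj_sub _ _ h := h.2.2.2.2
  mem_left _ _ h := h.2.2.2.1
  mem_right _ _ h := h.1

theorem Sub.isOutTree_ofParent (hp : ∀ v ∈ W, v ≠ r → p v ∈ W ∧ D.Adj (p v) v)
    (hrW : r ∈ W) (hreach : ∀ v ∈ W, ∃ n, p^[n] v = r) :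
    (Sub.ofParent D W r p).IsOutTree r := by
  refine ⟨hrW, fun _ h => h.2.1 rfl,
    fun v hv hvr => ⟨p v, ⟨hv, hvr, rfl, hp v hv hvr⟩, fun _ h => h.2.2.1.symm⟩,
    fun v hv => ?_⟩
  obtain ⟨n, hn⟩ := hreach v hv
  induction n generalizing v with
  | zero => exact hn ▸ Relation.ReflTransGen.refl
  | succ n ih =>
    by_cases hvr : v = r
    · exact hvr ▸ Relation.ReflTransGen.refl
    · have hpv := hp v hv hvr
      exact (ih (p v) hpv.1 hn).tail ⟨hv, hvr, rfl, hpv⟩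

theorem Sub.isPendantTree_ofParent (hp : ∀ v ∈ W, v ≠ r → p v ∈ W ∧ D.Adj (p v) v)
    (hrW : r ∈ W) (hSW : S ⊆ W) (hreach : ∀ v ∈ W, ∃ n, p^[n] v = r)
    (hroot : ∃! a, a ∈ W ∧ a ≠ r ∧ p a = r)
    (hleaf : ∀ s ∈ S, s ≠ r → ∀ w ∈ W, w ≠ r → p w ≠ s) :
    D.IsPendantTree S r (Sub.ofParent D W r p) := by
  refine ⟨isOutTree_ofParent hp hrW hreach, hSW, fun s hs => ?_⟩
  by_cases hsr : s = r
  · subst hsr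
    obtain ⟨a, ⟨haW, har, hpa⟩, ha⟩ := hroot
    have hout : {w | (Sub.ofParent D W s p).Adj s w} = {a} :=
      Set.eq_singleton_iff_unique_mem.mpr
        ⟨⟨haW, har, hpa, hrW, hpa ▸ (hp a haW har).2⟩,
          fun w hw => ha w ⟨hw.1, hw.2.1, hw.2.2.1⟩⟩
    have hin : {w | (Sub.ofParent D W s p).Adj w s} = ∅ :=
      Set.eq_empty_of_forall_notMem fun _ h => h.2.1 rfl
    rw [Sub.deg, hout, hin, Set.ncard_singleton, Set.ncard_empty]
  · have hsW := hSW hs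
    have hin : {w | (Sub.ofParent D W r p).Adj w s} = {p s} :=
      Set.eq_singleton_iff_unique_mem.mpr
        ⟨⟨hsW, hsr, rfl, hp s hsW hsr⟩, fun _ h => h.2.2.1.symm⟩
    have hout : {w | (Sub.ofParent D W r p).Adj s w} = ∅ :=
      Set.eq_empty_of_forall_notMem fun w h => hleaf s hs hsr w h.1 h.2.1 h.2.2.1
    rw [Sub.deg, hout, hin, Set.ncard_singleton, Set.ncard_empty]

end OfParent

end Dgraph

namespace triD

open Dgraph

variable {V : Type*} {G : SimpleGraph V} {A B C : Set V} {k : ℕ}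

theorem adj_root {w : V ⊕ Option (Fin (k - 1))}
    (h : (triD G A B C k).Adj (.inr none) w) : ∃ a ∈ A, w = .inl a := by
  rcases w with a | _ | _
  exacts [⟨a, h, rfl⟩, h.elim, h.elim]

theorem adj_terminal {u : V ⊕ Option (Fin (k - 1))} {j : Fin (k - 1)}
    (h : (triD G A B C k).Adj u (.inr (some j))) :
    ∃ x, u = .inl x ∧ ((j : ℕ) = 0 ∧ x ∈ B ∨ (j : ℕ) ≠ 0 ∧ x ∈ C) := by
  rcases u with x | _ | _
  exacts [⟨x, rfl, h⟩, h.elim, h.elim]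

theorem not_adj_inr (o o' : Option (Fin (k - 1))) :
    ¬ (triD G A B C k).Adj (.inr o) (.inr o') := by
  cases o <;> cases o' <;> exact id

section PendantTree

variable {T : (triD G A B C k).Sub}

theorem inter_preimage_inl_nonempty_A
    (hT : (triD G A B C k).IsPendantTree (Set.range Sum.inr) (Sum.inr none) T) :
    (A ∩ Sum.inl ⁻¹' T.verts).Nonempty := by
  obtain ⟨w, hw, -⟩ := hT.existsUnique_adj_root ⟨none, rfl⟩
  obtain ⟨a, ha, rfl⟩ := adj_root (T.adj_sub hw)
  exact ⟨a, ha, T.mem_right hw⟩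

theorem exists_adj_terminal
    (hT : (triD G A B C k).IsPendantTree (Set.range Sum.inr) (Sum.inr none) T)
    (j : Fin (k - 1)) :
    ∃ x ∈ Sum.inl ⁻¹' T.verts, (j : ℕ) = 0 ∧ x ∈ B ∨ (j : ℕ) ≠ 0 ∧ x ∈ C := by
  obtain ⟨u, hu, -⟩ := hT.1.2.2.1 _ (hT.2.1 ⟨some j, rfl⟩) (by simp)
  obtain ⟨x, rfl, hx⟩ := adj_terminal (T.adj_sub hu)
  exact ⟨x, T.mem_left hu, hx⟩

theorem inter_preimage_inl_nonempty_B (hk : 0 < k - 1)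
    (hT : (triD G A B C k).IsPendantTree (Set.range Sum.inr) (Sum.inr none) T) :
    (B ∩ Sum.inl ⁻¹' T.verts).Nonempty := by
  obtain ⟨x, hx, hxB | ⟨h, -⟩⟩ := exists_adj_terminal hT ⟨0, hk⟩
  exacts [⟨x, hxB.2, hx⟩, absurd rfl h]

theorem inter_preimage_inl_nonempty_C (hk : 1 < k - 1)
    (hT : (triD G A B C k).IsPendantTree (Set.range Sum.inr) (Sum.inr none) T) :
    (C ∩ Sum.inl ⁻¹' T.verts).Nonempty := by
  obtain ⟨x, hx, ⟨h, -⟩ | hxC⟩ := exists_adj_terminal hT ⟨1, hk⟩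
  exacts [absurd h one_ne_zero, ⟨x, hxC.2, hx⟩]

theorem reachable_induce_of_reflTransGen {x y : V} (hx : Sum.inl x ∈ T.verts)
    (hy : Sum.inl y ∈ T.verts)
    (h : Relation.ReflTransGen
      (fun u w => T.Adj u w ∧ u ∉ Set.range Sum.inr ∧ w ∉ Set.range Sum.inr)
      (Sum.inl x) (Sum.inl y)) :
    (G.induce (Sum.inl ⁻¹' T.verts)).Reachable ⟨x, hx⟩ ⟨y, hy⟩ := by
  generalize hw : (Sum.inl y : V ⊕ Option (Fin (k - 1))) = w at h
  induction h generalizing y with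
  | refl => cases Sum.inl_injective hw; rfl
  | @tail u _ _ huw ih =>
    subst hw
    rcases u with z | o
    · exact (ih (T.mem_left huw.1) rfl).trans
        (SimpleGraph.Adj.reachable (T.adj_sub huw.1))
    · exact absurd ⟨o, rfl⟩ huw.2.1

theorem connected_induce_of_isPendantTree [Finite V]
    (hT : (triD G A B C k).IsPendantTree (Set.range Sum.inr) (Sum.inr none) T) :
    (G.induce (Sum.inl ⁻¹' T.verts)).Connected := by
  obtain ⟨w, hw, -⟩ := hT.existsUnique_adj_root ⟨none, rfl⟩
  obtain ⟨a, -, rfl⟩ := adj_root (T.adj_sub hw)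
  have ha : a ∈ Sum.inl ⁻¹' T.verts := T.mem_right hw
  have hreach : ∀ v : Sum.inl ⁻¹' T.verts,
      (G.induce (Sum.inl ⁻¹' T.verts)).Reachable ⟨a, ha⟩ v := fun ⟨v, hv⟩ =>
    reachable_induce_of_reflTransGen ha hv <|
      hT.reflTransGen_of_notMem ⟨none, rfl⟩ hw (hT.1.2.2.2 _ hv) (by simp)
  have : Nonempty (Sum.inl ⁻¹' T.verts) := ⟨⟨a, ha⟩⟩
  exact ⟨fun u v => (hreach u).symm.trans (hreach v)⟩

end PendantTree

theorem bddAbove_pendantPacking [Finite V] :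
    BddAbove {n : ℕ | ∃ f : Fin n → (triD G A B C k).Sub,
      (triD G A B C k).IsPendantPacking (Set.range Sum.inr) (Sum.inr none) f} := by
  refine ⟨A.ncard, fun n ⟨f, hpend, hdisj⟩ => ?_⟩
  simpa using card_le_ncard_of_pairwise_disjoint A.toFinite
    (fun i j hij => (hdisj i j hij).disjoint_preimage_inl)
    (fun i => inter_preimage_inl_nonempty_A (hpend i))

section TripleTree

variable [DecidableEq V]

def tripleParent (a b c pb pc : V) : V ⊕ Option (Fin (k - 1)) → V ⊕ Option (Fin (k - 1))
  | .inl v => if v = a then .inr none else if v = b then .inl pb else .inl pc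
  | .inr none => .inr none
  | .inr (some j) => if (j : ℕ) = 0 then .inl b else .inl c

def tripleVerts (k : ℕ) (a b c : V) : Set (V ⊕ Option (Fin (k - 1))) :=
  Set.range Sum.inr ∪ Sum.inl '' {a, b, c}

def tripleTree (G : SimpleGraph V) (A B C : Set V) (k : ℕ) (a b c pb pc : V) :
    (triD G A B C k).Sub :=
  Sub.ofParent _ (tripleVerts k a b c) (.inr none) (tripleParent a b c pb pc)

variable {a b c pb pc : V}

theorem tripleParent_inl_a : tripleParent (k := k) a b c pb pc (.inl a) = .inr none :=
  if_pos rfl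

theorem tripleParent_inl_b (hab : a ≠ b) :
    tripleParent (k := k) a b c pb pc (.inl b) = .inl pb := by
  simp [tripleParent, hab.symm]

theorem tripleParent_inl_c (hac : a ≠ c) (hbc : b ≠ c) :
    tripleParent (k := k) a b c pb pc (.inl c) = .inl pc := by
  simp [tripleParent, hac.symm, hbc.symm]

theorem tripleParent_eq_inr {w : V ⊕ Option (Fin (k - 1))} {o : Option (Fin (k - 1))}
    (h : tripleParent a b c pb pc w = .inr o) : o = none ∧ (w = .inl a ∨ w = .inr none) := by
  rcases w with v | _ | j <;> simp only [tripleParent] at h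
  · split_ifs at h with hva
    exact ⟨(Sum.inr_injective h).symm, Or.inl (congrArg _ hva)⟩
  · exact ⟨(Sum.inr_injective h).symm, Or.inr rfl⟩
  · split_ifs at h

theorem tripleParent_mem_and_adj (ha : a ∈ A) (hb : b ∈ B) (hc : c ∈ C) (hab : a ≠ b)
    (hac : a ≠ c) (hbc : b ≠ c) (hpb : G.Adj pb b) (hpc : G.Adj pc c)
    (hpbW : pb ∈ ({a, b, c} : Set V)) (hpcW : pc ∈ ({a, b, c} : Set V)) :
    ∀ v ∈ tripleVerts k a b c, v ≠ .inr none →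
      tripleParent a b c pb pc v ∈ tripleVerts k a b c ∧
        (triD G A B C k).Adj (tripleParent a b c pb pc v) v := by
  rintro v (⟨_ | j, rfl⟩ | ⟨x, hx, rfl⟩) hvr
  · exact absurd rfl hvr
  · by_cases hj : (j : ℕ) = 0 <;> simp [tripleVerts, tripleParent, hj, triD, triAdj, hb, hc]
  · rcases hx with hx | hx | hx <;> subst x
    · simp [tripleVerts, tripleParent, triD, triAdj, ha]
    · rw [tripleParent_inl_b hab]
      exact ⟨Or.inr ⟨pb, hpbW, rfl⟩, hpb⟩
    · rw [tripleParent_inl_c hac hbc]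
      exact ⟨Or.inr ⟨pc, hpcW, rfl⟩, hpc⟩

theorem exists_iterate_tripleParent_eq_root (hab : a ≠ b) (hac : a ≠ c) (hbc : b ≠ c)
    (hshape : pb = a ∧ pc = a ∨ pb = a ∧ pc = b ∨ pb = c ∧ pc = a) :
    ∀ v ∈ tripleVerts k a b c, ∃ n, (tripleParent a b c pb pc)^[n] v = .inr none := by
  have hpb := tripleParent_inl_b (k := k) (c := c) (pb := pb) (pc := pc) hab
  have hpc := tripleParent_inl_c (k := k) (pb := pb) (pc := pc) hac hbc
  set p := tripleParent (k := k) a b c pb pc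
  have step : ∀ v, (∃ n, p^[n] (p v) = .inr none) → ∃ n, p^[n] v = .inr none :=
    fun _ ⟨n, hn⟩ => ⟨n + 1, hn⟩
  have ra : ∃ n, p^[n] (.inl a) = .inr none := ⟨1, tripleParent_inl_a (c := c)⟩
  have rbc : (∃ n, p^[n] (.inl b) = .inr none) ∧ ∃ n, p^[n] (.inl c) = .inr none := by
    rcases hshape with ⟨rfl, rfl⟩ | ⟨rfl, rfl⟩ | ⟨rfl, rfl⟩
    · exact ⟨step _ (hpb ▸ ra), step _ (hpc ▸ ra)⟩
    · have rb := step _ (hpb ▸ ra)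
      exact ⟨rb, step _ (hpc ▸ rb)⟩
    · have rc := step _ (hpc ▸ ra)
      exact ⟨step _ (hpb ▸ rc), rc⟩
  rintro v (⟨_ | j, rfl⟩ | ⟨x, hx, rfl⟩)
  · exact ⟨0, rfl⟩
  · refine step _ ?_
    by_cases hj : (j : ℕ) = 0 <;> simp only [p, tripleParent, hj, if_true, if_false]
    exacts [rbc.1, rbc.2]
  · rcases hx with hx | hx | hx <;> subst x
    exacts [ra, rbc.1, rbc.2]

theorem isPendantTree_tripleTree (ha : a ∈ A) (hb : b ∈ B) (hc : c ∈ C)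
    (hab : a ≠ b) (hac : a ≠ c) (hbc : b ≠ c) (hpb : G.Adj pb b) (hpc : G.Adj pc c)
    (hshape : pb = a ∧ pc = a ∨ pb = a ∧ pc = b ∨ pb = c ∧ pc = a) :
    (triD G A B C k).IsPendantTree (Set.range Sum.inr) (Sum.inr none)
      (tripleTree G A B C k a b c pb pc) := by
  have hpbW : pb ∈ ({a, b, c} : Set V) := by
    rcases hshape with ⟨rfl, -⟩ | ⟨rfl, -⟩ | ⟨rfl, -⟩ <;> simp
  have hpcW : pc ∈ ({a, b, c} : Set V) := by
    rcases hshape with ⟨-, rfl⟩ | ⟨-, rfl⟩ | ⟨-, rfl⟩ <;> simp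
  refine Sub.isPendantTree_ofParent
    (tripleParent_mem_and_adj ha hb hc hab hac hbc hpb hpc hpbW hpcW)
    (Or.inl ⟨none, rfl⟩) Set.subset_union_left
    (exists_iterate_tripleParent_eq_root hab hac hbc hshape) ?_ ?_
  · refine ⟨.inl a, ⟨Or.inr ⟨a, by simp, rfl⟩, by simp, tripleParent_inl_a⟩, fun w ⟨_, hwr, hw⟩ => ?_⟩
    exact (tripleParent_eq_inr hw).2.resolve_right hwr
  · rintro _ ⟨o, rfl⟩ hor w - - hw
    exact hor (by rw [(tripleParent_eq_inr hw).1])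

theorem internallyDisjoint_tripleTree {a' b' c' pb' pc' : V}
    (h : Disjoint ({a, b, c} : Set V) {a', b', c'}) :
    (triD G A B C k).InternallyDisjoint (Set.range Sum.inr)
      (tripleTree G A B C k a b c pb pc) (tripleTree G A B C k a' b' c' pb' pc') := by
  refine InternallyDisjoint.of_verts_inter_eq ?_ ?_
  · rw [tripleTree, tripleTree, Sub.ofParent, Sub.ofParent, tripleVerts, tripleVerts,
      ← Set.union_inter_distrib_left, ← Set.image_inter Sum.inl_injective, h.inter_eq,
      Set.image_empty, Set.union_empty]
  · rintro _ ⟨o, rfl⟩ _ ⟨o', rfl⟩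
    exact not_adj_inr o o'

end TripleTree

end triD

theorem tri_tauSr_iff_CLLM_general {V : Type*} [Fintype V] {k ℓ : ℕ}
    (hk3 : 3 ≤ k) (G : SimpleGraph V) (A B C : Set V)
    (hAB : Disjoint A B) (hAC : Disjoint A C) (hBC : Disjoint B C)
    (hcover : A ∪ B ∪ C = Set.univ)
    (hA : A.ncard = ℓ) (hB : B.ncard = ℓ) (hC : C.ncard = ℓ) :
    ℓ ≤ (triD G A B C k).tauSr (Set.range Sum.inr) (Sum.inr none) ↔
      ∃ f : V → Fin ℓ,
        (∀ i, ∃! a, a ∈ A ∧ f a = i) ∧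
        (∀ i, ∃! b, b ∈ B ∧ f b = i) ∧
        (∀ i, ∃! c, c ∈ C ∧ f c = i) ∧
        ∀ i, (G.induce {v | f v = i}).Connected := by
  classical
  rw [Dgraph.le_tauSr_iff triD.bddAbove_pendantPacking]
  constructor
  · rintro ⟨T, hpend, hdisj⟩
    obtain ⟨f, hfA, hfB, hfC, hfU⟩ := exists_partition_of_pairwise_disjoint
      (U := fun i => Sum.inl ⁻¹' (T i).verts)
      (fun i j hij => (hdisj i j hij).disjoint_preimage_inl) hcover
      (by simpa using hA) (by simpa using hB) (by simpa using hC)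
      (fun i => triD.inter_preimage_inl_nonempty_A (hpend i))
      (fun i => triD.inter_preimage_inl_nonempty_B (by omega) (hpend i))
      (fun i => triD.inter_preimage_inl_nonempty_C (by omega) (hpend i))
    exact ⟨f, hfA, hfB, hfC, fun i => hfU i ▸ triD.connected_induce_of_isPendantTree (hpend i)⟩
  · rintro ⟨f, hfA, hfB, hfC, hconn⟩
    choose a haA b hbB c hcC hclass using fun i =>
      exists_triple_of_existsUnique hcover (hfA i) (hfB i) (hfC i)
    have hab i : a i ≠ b i := hAB.ne_of_mem (haA i) (hbB i)
    choose pb pc hpb hpc hshape using fun i =>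
      SimpleGraph.exists_parents_of_connected_induce (hab i) (hclass i ▸ hconn i)
    refine ⟨fun i => triD.tripleTree G A B C k (a i) (b i) (c i) (pb i) (pc i), fun i => ?_,
      fun i j hij => triD.internallyDisjoint_tripleTree ?_⟩
    · exact triD.isPendantTree_tripleTree (haA i) (hbB i) (hcC i) (hab i)
        (hAC.ne_of_mem (haA i) (hcC i)) (hBC.ne_of_mem (hbB i) (hcC i)) (hpb i) (hpc i)
        (hshape i)
    · rw [← hclass i, ← hclass j]
      exact Set.disjoint_left.mpr fun v (hvi : f v = i) (hvj : f v = j) => hij (hvi ▸ hvj)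

/-- Theorem 2.4 (key equivalence): for a tripartite graph `G` with 3-partition `(A, B, C)`,
`|A| = |B| = |C| = ℓ`, and the constructed symmetric digraph `D` with terminal set
`S = {r, s₁, …, s_{k-1}}` rooted at `r`, we have `τ_{S,r}(D) ≥ ℓ` iff `V(G)` can be
partitioned into `ℓ` triples, each containing exactly one vertex of each of `A`, `B`, `C`
and inducing a connected subgraph of `G`. -/
theorem tri_tauSr_iff_CLLM {V : Type*} [Fintype V] {k ℓ : ℕ}
    (hk3 : 3 ≤ k) (hl2 : 2 ≤ ℓ) (G : SimpleGraph V) (A B C : Set V)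
    (hAB : Disjoint A B) (hAC : Disjoint A C) (hBC : Disjoint B C)
    (hcover : A ∪ B ∪ C = Set.univ)
    (hA : A.ncard = ℓ) (hB : B.ncard = ℓ) (hC : C.ncard = ℓ)
    (hindepA : ∀ x ∈ A, ∀ y ∈ A, ¬ G.Adj x y)
    (hindepB : ∀ x ∈ B, ∀ y ∈ B, ¬ G.Adj x y)
    (hindepC : ∀ x ∈ C, ∀ y ∈ C, ¬ G.Adj x y) :
    ℓ ≤ (triD G A B C k).tauSr (Set.range Sum.inr) (Sum.inr none) ↔
      ∃ f : V → Fin ℓ,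
        (∀ i, ∃! a, a ∈ A ∧ f a = i) ∧
        (∀ i, ∃! b, b ∈ B ∧ f b = i) ∧
        (∀ i, ∃! c, c ∈ C ∧ f c = i) ∧
        ∀ i, (G.induce {v | f v = i}).Connected :=
  tri_tauSr_iff_CLLM_general hk3 G A B C hAB hAC hBC hcover hA hB hC
end
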